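/- Let p, u, v, w, q, z be real numbers. Define F : ℝ³ → Matrix 3 3 ℝ by F(y) = [[p, (u − v + (u+v)·e^{−2y₁})/2, (−u + v + (u+v)·e^{−2y₁})/2], [(w − z + (w+z)·e^{−2y₁})/2, q, −q], [(−w + z + (w+z)·e^{−2y₁})/2, −q, q]], and let G(y) = (F(y) + F(y)ᵀ)/2 be its symmetric part. Then G(y) is invertible for every y ∈ ℝ³ if and only if q·(u + v + w + z) ≠ 0. -/
import Mathlib


open Real Matrix

/-- The tensor `F` of the sigma model on the Manin triple `(3|1)`. -/
noncomputable def F31 (p u v w q z : ℝ) (y : Fin 3 → ℝ) : Matrix (Fin 3) (Fin 3) ℝ :=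
  !![p, (u - v + (u + v) * exp (-(2 * y 0))) / 2, (-u + v + (u + v) * exp (-(2 * y 0))) / 2;
     (w - z + (w + z) * exp (-(2 * y 0))) / 2,  q,  -q;
     (-w + z + (w + z) * exp (-(2 * y 0))) / 2, -q,  q]

set_option maxHeartbeats 1600000 in
lemma det31 (p u v w q z : ℝ) (y : Fin 3 → ℝ) :
    ((1 / 2 : ℝ) • (F31 p u v w q z y + (F31 p u v w q z y)ᵀ)).det =
      -(q * (u + v + w + z) ^ 2 * exp (-(2 * y 0)) ^ 2) / 4 := by
  have ht : (F31 p u v w q z y)ᵀ =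
      !![p, (w - z + (w + z) * exp (-(2 * y 0))) / 2, (-w + z + (w + z) * exp (-(2 * y 0))) / 2;
         (u - v + (u + v) * exp (-(2 * y 0))) / 2, q, -q;
         (-u + v + (u + v) * exp (-(2 * y 0))) / 2, -q, q] := by
    ext i j
    fin_cases i <;> fin_cases j <;> rfl
  have hG : (1 / 2 : ℝ) • (F31 p u v w q z y + (F31 p u v w q z y)ᵀ) =
      !![p, (u - v + w - z + (u + v + w + z) * exp (-(2 * y 0))) / 4,
           (-u + v - w + z + (u + v + w + z) * exp (-(2 * y 0))) / 4;
         (u - v + w - z + (u + v + w + z) * exp (-(2 * y 0))) / 4, q, -q;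
         (-u + v - w + z + (u + v + w + z) * exp (-(2 * y 0))) / 4, -q, q] := by
    rw [ht]
    ext i j
    fin_cases i <;> fin_cases j <;>
      simp [F31, Matrix.smul_apply, Matrix.add_apply] <;> ring
  rw [hG, Matrix.det_fin_three]
  simp only [Matrix.of_apply, Matrix.cons_val', Matrix.cons_val_zero, Matrix.cons_val_one,
    Matrix.cons_val_two, Matrix.tail_cons, Matrix.head_cons, Matrix.empty_val',
    Matrix.cons_val_fin_one, Matrix.head_fin_const]
  ring

/-- The metric of the `(3|1)` sigma model is invertible everywhere iff
`q·(u+v+w+z) ≠ 0`. -/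
theorem metric31_invertible_iff (p u v w q z : ℝ) :
    (∀ y : Fin 3 → ℝ,
        IsUnit ((1 / 2 : ℝ) • (F31 p u v w q z y + (F31 p u v w q z y)ᵀ))) ↔
      q * (u + v + w + z) ≠ 0 := by
  have key : ∀ y : Fin 3 → ℝ,
      IsUnit ((1 / 2 : ℝ) • (F31 p u v w q z y + (F31 p u v w q z y)ᵀ)) ↔
        q * (u + v + w + z) ≠ 0 := by
    intro y
    rw [Matrix.isUnit_iff_isUnit_det, isUnit_iff_ne_zero, det31]
    have he : exp (-(2 * y 0)) ≠ 0 := exp_ne_zero _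
    constructor
    · intro h hqs
      apply h
      have : q * (u + v + w + z) ^ 2 = q * (u + v + w + z) * (u + v + w + z) := by ring
      rw [this, hqs]
      ring
    · intro h hd
      apply h
      have h4 : (-(q * (u + v + w + z) ^ 2 * exp (-(2 * y 0)) ^ 2)) = 0 := by
        field_simp at hd; linarith [hd]
      have h5 : q * (u + v + w + z) ^ 2 * exp (-(2 * y 0)) ^ 2 = 0 := by linarith
      have : q * (u + v + w + z) ^ 2 = 0 :=
        (mul_eq_zero.mp h5).resolve_right (pow_ne_zero 2 he)
      rcases mul_eq_zero.mp this with h1 | h1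
      · rw [h1]; ring
      · have : u + v + w + z = 0 := pow_eq_zero_iff (by norm_num) |>.mp h1
        rw [this]; ring
  constructor
  · intro h; exact (key 0).mp (h 0)
  · intro h y; exact (key y).mpr h
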